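/- arXiv:2112.04660 — 4 statements merged into one kernel-verified Lean document; each statement's English description precedes it below -/
import Mathlib

section
/- Let μ > 0 and let a nonnegative sequence a_k satisfy a_{k+1} ≤ (1 - μβ_k) a_k + C β_k e_k with β_k ∈ (0, 1/μ), C ≥ 0, e_k ≥ 0. If m_K := ∏_{s=0}^{K-1}(1 - μβ_s) → 0, e_K → 0, and m_K ∑_{k=0}^{K-1} β_k e_k / m_{k+1} → 0 as K → ∞, then a_K → 0. -/
open Finset Filter

/-- Dividing by `m K = ∏ s < K, r s`, the recursion says that `a K / m K` grows by at most
`b K / m (K + 1)` per step. -/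
theorem le_prod_mul_add_sum_div_prod {𝕜 : Type*} [Field 𝕜] [LinearOrder 𝕜] [IsStrictOrderedRing 𝕜]
    {r a b : ℕ → 𝕜} (hr : ∀ k, 0 < r k) (hrec : ∀ k, a (k + 1) ≤ r k * a k + b k) (K : ℕ) :
    a K ≤ (∏ s ∈ range K, r s) * (a 0 + ∑ k ∈ range K, b k / ∏ s ∈ range (k + 1), r s) := by
  induction K with
  | zero => simp
  | succ K ih =>
    have hprod : (∏ s ∈ range (K + 1), r s) ≠ 0 := (prod_pos fun s _ => hr s).ne'
    calc a (K + 1) ≤ r K * a K + b K := hrec K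
      _ ≤ r K * ((∏ s ∈ range K, r s) *
            (a 0 + ∑ k ∈ range K, b k / ∏ s ∈ range (k + 1), r s)) + b K := by
        gcongr; exact (hr K).le
      _ = _ := by
        rw [sum_range_succ, ← add_assoc, mul_add _ _ (b K / _), mul_div_cancel₀ _ hprod, prod_range_succ]
        ring

theorem stmt_3_general (μ C : ℝ) (hμ : 0 < μ)
    (a β e : ℕ → ℝ) (ha : ∀ k, 0 ≤ a k)
    (hβ : ∀ k, β k ∈ Set.Ioo 0 (1 / μ))
    (hrec : ∀ k, a (k + 1) ≤ (1 - μ * β k) * a k + C * β k * e k)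
    (hm : Filter.Tendsto (fun K => ∏ s ∈ Finset.range K, (1 - μ * β s))
      Filter.atTop (nhds 0))
    (hsum : Filter.Tendsto (fun K => (∏ s ∈ Finset.range K, (1 - μ * β s)) *
        ∑ k ∈ Finset.range K, β k * e k / ∏ s ∈ Finset.range (k + 1), (1 - μ * β s))
      Filter.atTop (nhds 0)) :
    Filter.Tendsto a Filter.atTop (nhds 0) := by
  have hfac : ∀ k, 0 < 1 - μ * β k := fun k => by
    have h := mul_lt_mul_of_pos_left (hβ k).2 hμ
    rw [mul_one_div_cancel hμ.ne'] at h
    linarith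
  refine squeeze_zero ha (le_prod_mul_add_sum_div_prod hfac hrec) ?_
  have hlim := (hm.mul_const (a 0)).add (hsum.const_mul C)
  simp only [zero_mul, mul_zero, add_zero] at hlim
  convert hlim using 2 with K
  simp_rw [mul_assoc C, mul_div_assoc, ← mul_sum]
  ring

theorem stmt_3 (μ C : ℝ) (hμ : 0 < μ) (hC : 0 ≤ C)
    (a β e : ℕ → ℝ) (ha : ∀ k, 0 ≤ a k) (he : ∀ k, 0 ≤ e k)
    (hβ : ∀ k, β k ∈ Set.Ioo 0 (1 / μ))
    (hrec : ∀ k, a (k + 1) ≤ (1 - μ * β k) * a k + C * β k * e k)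
    (hm : Filter.Tendsto (fun K => ∏ s ∈ Finset.range K, (1 - μ * β s))
      Filter.atTop (nhds 0))
    (he0 : Filter.Tendsto e Filter.atTop (nhds 0))
    (hsum : Filter.Tendsto (fun K => (∏ s ∈ Finset.range K, (1 - μ * β s)) *
        ∑ k ∈ Finset.range K, β k * e k / ∏ s ∈ Finset.range (k + 1), (1 - μ * β s))
      Filter.atTop (nhds 0)) :
    Filter.Tendsto a Filter.atTop (nhds 0) :=
  stmt_3_general μ C hμ a β e ha hβ hrec hm hsum
end

section
/- Let G: ℝ^m × ℝ^n → ℝ be C² with ω ↦ G(λ,ω) μ-strongly convex for each λ (μ > 0), and suppose the mixed partial derivative satisfies ‖∂²_{ωλ} G(λ,ω)‖ ≤ C for all (λ,ω). If ω_λ denotes the unique minimizer of G(λ,·), then λ ↦ ω_λ is Lipschitz with constant C/μ: ‖ω_{λ₁} − ω_{λ₂}‖ ≤ (C/μ)‖λ₁ − λ₂‖. -/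
/-!
Rather than differentiating `l ↦ ω l` via the implicit function theorem, compare two minimizers
directly. For `fᵢ := G (lᵢ, ·)`, strong convexity gives quadratic growth away from the minimizer,
`fᵢ (ω lᵢ) + μ/2 ‖ω l₁ - ω l₂‖² ≤ fᵢ (ω lⱼ)`; adding the two inequalities gives
`μ ‖ω l₁ - ω l₂‖² ≤ (f₁ - f₂) (ω l₂) - (f₁ - f₂) (ω l₁)`. By the mean value inequality in `l`,
the gradients of `f₁` and `f₂` differ by at most `C ‖l₁ - l₂‖` everywhere, so, by the mean value
inequality in `w`, `f₁ - f₂` is `C ‖l₁ - l₂‖`-Lipschitz.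
-/

open Set Filter Topology InnerProductSpace
open scoped NNReal

section StrongConvexity

variable {E : Type*} [NormedAddCommGroup E] [NormedSpace ℝ E] {s : Set E} {m : ℝ} {f g : E → ℝ}
  {x y : E}

theorem StrongConvexOn.add_mul_norm_sub_sq_le_of_isMinOn (hf : StrongConvexOn s m f)
    (hx : IsMinOn f s x) (hxs : x ∈ s) (hys : y ∈ s) :
    f x + m / 2 * ‖x - y‖ ^ 2 ≤ f y := by
  -- Minimality at `x` compared with strong convexity along the segment `[x, y]`, divided by `t`.
  have hsegment : ∀ t ∈ Ioo (0 : ℝ) 1, f x + (1 - t) * (m / 2 * ‖x - y‖ ^ 2) ≤ f y := by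
    rintro t ⟨ht₀, ht₁⟩
    have ha : (0 : ℝ) ≤ 1 - t := by linarith
    have hconv := hf.2 hxs hys ha ht₀.le (sub_add_cancel 1 t)
    have hmin := isMinOn_iff.1 hx _ (hf.1 hxs hys ha ht₀.le (sub_add_cancel 1 t))
    simp only [smul_eq_mul] at hconv
    exact le_of_mul_le_mul_left (by linarith) ht₀
  have hlim : Tendsto (fun t : ℝ => f x + (1 - t) * (m / 2 * ‖x - y‖ ^ 2)) (𝓝[>] 0)
      (𝓝 (f x + m / 2 * ‖x - y‖ ^ 2)) := by
    have hcont : Continuous (fun t : ℝ => f x + (1 - t) * (m / 2 * ‖x - y‖ ^ 2)) := by fun_prop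
    simpa using (hcont.tendsto 0).mono_left nhdsWithin_le_nhds
  exact le_of_tendsto hlim (eventually_of_mem (Ioo_mem_nhdsGT one_pos) hsegment)

theorem StrongConvexOn.mul_norm_sub_le_of_lipschitzOnWith_sub {K : ℝ≥0}
    (hf : StrongConvexOn s m f) (hg : StrongConvexOn s m g)
    (hx : IsMinOn f s x) (hy : IsMinOn g s y) (hxs : x ∈ s) (hys : y ∈ s)
    (hfg : LipschitzOnWith K (f - g) s) :
    m * ‖x - y‖ ≤ K := by
  have hfx := hf.add_mul_norm_sub_sq_le_of_isMinOn hx hxs hys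
  have hgy := hg.add_mul_norm_sub_sq_le_of_isMinOn hy hys hxs
  have hdiff : (f - g) y - (f - g) x ≤ K * ‖x - y‖ := by
    simpa [Real.dist_eq, dist_eq_norm, norm_sub_rev x y] using
      (le_abs_self _).trans (hfg.dist_le_mul y hys x hxs)
  rw [norm_sub_rev y x] at hgy
  simp only [Pi.sub_apply] at hdiff
  have hsq : m * ‖x - y‖ * ‖x - y‖ ≤ K * ‖x - y‖ := by linarith
  rcases (norm_nonneg (x - y)).eq_or_lt with h | h
  · rw [← h, mul_zero]
    exact K.2
  · exact le_of_mul_le_mul_right hsq h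

end StrongConvexity

section ParametricGradient

variable {E F : Type*} [NormedAddCommGroup E] [NormedSpace ℝ E]
  [NormedAddCommGroup F] [InnerProductSpace ℝ F] [CompleteSpace F] {G : E × F → ℝ} {C : ℝ}

theorem ContDiff.differentiable_gradient_snd (hG : ContDiff ℝ 2 G) (w : F) :
    Differentiable ℝ (fun l => gradient (fun w' => G (l, w')) w) := by
  have hfderiv : ContDiff ℝ 1 (fun l => fderiv ℝ (fun w' => G (l, w')) w) :=
    ContDiff.fderiv (f := fun l w' => G (l, w')) hG contDiff_const (by norm_num)
  exact ((toDual ℝ F).symm.contDiff.comp hfderiv).differentiable one_ne_zero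

theorem norm_gradient_sub_gradient_le (hG : ContDiff ℝ 2 G) {w : F}
    (hmix : ∀ l, ‖fderiv ℝ (fun l' => gradient (fun w' => G (l', w')) w) l‖ ≤ C) (l₁ l₂ : E) :
    ‖gradient (fun w' => G (l₁, w')) w - gradient (fun w' => G (l₂, w')) w‖ ≤ C * ‖l₁ - l₂‖ :=
  convex_univ.norm_image_sub_le_of_norm_fderiv_le
    (fun l _ => hG.differentiable_gradient_snd w l) (fun l _ => hmix l)
    (mem_univ l₂) (mem_univ l₁)

theorem lipschitzWith_sub_of_norm_fderiv_gradient_le (hG : ContDiff ℝ 2 G)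
    (hmix : ∀ l w, ‖fderiv ℝ (fun l' => gradient (fun w' => G (l', w')) w) l‖ ≤ C)
    (l₁ l₂ : E) :
    LipschitzWith (C * ‖l₁ - l₂‖).toNNReal (fun w => G (l₁, w) - G (l₂, w)) := by
  have hdiff (l : E) : Differentiable ℝ (fun w => G (l, w)) :=
    (hG.comp (contDiff_const.prodMk contDiff_id)).differentiable two_ne_zero
  refine LipschitzWith.of_dist_le' fun w₁ w₂ => ?_
  rw [dist_eq_norm, dist_eq_norm]
  refine convex_univ.norm_image_sub_le_of_norm_fderiv_le
    (fun w _ => ((hdiff l₁).sub (hdiff l₂)) w) (fun w _ => ?_) (mem_univ w₂) (mem_univ w₁)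
  rw [fderiv_sub (hdiff l₁ w) (hdiff l₂ w), ← toDual_gradient, ← toDual_gradient, ← map_sub,
    LinearIsometryEquiv.norm_map]
  exact norm_gradient_sub_gradient_le hG (fun l => hmix l w) l₁ l₂

end ParametricGradient

theorem stmt_8_general {m n : ℕ} (μ C : ℝ) (hμ : 0 < μ)
    (G : EuclideanSpace ℝ (Fin m) × EuclideanSpace ℝ (Fin n) → ℝ)
    (hG : ContDiff ℝ 2 G)
    (hconv : ∀ l, StrongConvexOn Set.univ μ (fun w => G (l, w)))
    (hmix : ∀ l w, ‖fderiv ℝ (fun l' => gradient (fun w' => G (l', w')) w) l‖ ≤ C)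
    (ω : EuclideanSpace ℝ (Fin m) → EuclideanSpace ℝ (Fin n))
    (hmin : ∀ l w, G (l, ω l) ≤ G (l, w)) :
    ∀ l₁ l₂, ‖ω l₁ - ω l₂‖ ≤ (C / μ) * ‖l₁ - l₂‖ := by
  intro l₁ l₂
  have hC : 0 ≤ C := (norm_nonneg _).trans (hmix l₁ (ω l₁))
  have hstable := (hconv l₁).mul_norm_sub_le_of_lipschitzOnWith_sub (hconv l₂)
    (fun w _ => hmin l₁ w) (fun w _ => hmin l₂ w) (mem_univ _) (mem_univ _)
    (lipschitzWith_sub_of_norm_fderiv_gradient_le hG hmix l₁ l₂).lipschitzOnWith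
  rw [Real.coe_toNNReal _ (by positivity)] at hstable
  rwa [div_mul_eq_mul_div, le_div_iff₀ hμ, mul_comm]

theorem stmt_8 {m n : ℕ} (μ C : ℝ) (hμ : 0 < μ) (hC : 0 ≤ C)
    (G : EuclideanSpace ℝ (Fin m) × EuclideanSpace ℝ (Fin n) → ℝ)
    (hG : ContDiff ℝ 2 G)
    (hconv : ∀ l, StrongConvexOn Set.univ μ (fun w => G (l, w)))
    (hmix : ∀ l w, ‖fderiv ℝ (fun l' => gradient (fun w' => G (l', w')) w) l‖ ≤ C)
    (ω : EuclideanSpace ℝ (Fin m) → EuclideanSpace ℝ (Fin n))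
    (hmin : ∀ l w, G (l, ω l) ≤ G (l, w)) :
    ∀ l₁ l₂, ‖ω l₁ - ω l₂‖ ≤ (C / μ) * ‖l₁ - l₂‖ :=
  stmt_8_general μ C hμ G hG hconv hmix ω hmin
end

section
/- Let F: ℝ^m × ℝ^n → ℝ with ∂_λ F L₁-Lipschitz in ω, and let J(λ,ω) := ∂²_{ωλ} G(λ,ω) (an m×n matrix) satisfy ‖J(λ,ω)‖ ≤ Γ₁ and ‖J(λ,ω) − J(λ,ω')‖ ≤ L₂‖ω − ω'‖. Fix λ, and let ω*, v* be reference points with ‖v*‖ ≤ M. Then for any ω, v: ‖(∂_λ F(λ,ω) − J(λ,ω)v) − (∂_λ F(λ,ω*) − J(λ,ω*)v*)‖² ≤ (2L₁² + 4M²L₂²)‖ω − ω*‖² + 4Γ₁²‖v − v*‖². -/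
section SquaredNorm

variable {E : Type*} [SeminormedAddGroup E]

lemma norm_add_sq_le_two_mul (a b : E) : ‖a + b‖ ^ 2 ≤ 2 * (‖a‖ ^ 2 + ‖b‖ ^ 2) :=
  (pow_le_pow_left₀ (norm_nonneg _) (norm_add_le a b) 2).trans add_sq_le

lemma norm_add_add_sq_le (a b c : E) :
    ‖a + b + c‖ ^ 2 ≤ 2 * ‖a‖ ^ 2 + 4 * ‖b‖ ^ 2 + 4 * ‖c‖ ^ 2 := by
  have hbc := norm_add_sq_le_two_mul b c
  calc ‖a + b + c‖ ^ 2 = ‖a + (b + c)‖ ^ 2 := by rw [add_assoc]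
    _ ≤ 2 * (‖a‖ ^ 2 + ‖b + c‖ ^ 2) := norm_add_sq_le_two_mul a (b + c)
    _ ≤ 2 * ‖a‖ ^ 2 + 4 * ‖b‖ ^ 2 + 4 * ‖c‖ ^ 2 := by linarith

end SquaredNorm

lemma ContinuousLinearMap.sub_apply_sub_eq {𝕜 E F : Type*} [NontriviallyNormedField 𝕜]
    [SeminormedAddCommGroup E] [SeminormedAddCommGroup F] [NormedSpace 𝕜 E] [NormedSpace 𝕜 F]
    (T T' : E →L[𝕜] F) (v v' : E) : T v - T' v' = (T - T') v + T' (v - v') := by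
  simp only [sub_apply, map_sub]
  abel

theorem stmt_16 {m n : ℕ} (L₁ L₂ Γ₁ M : ℝ)
    (F : EuclideanSpace ℝ (Fin m) × EuclideanSpace ℝ (Fin n) → ℝ)
    (J : EuclideanSpace ℝ (Fin m) → EuclideanSpace ℝ (Fin n) →
      (EuclideanSpace ℝ (Fin n) →L[ℝ] EuclideanSpace ℝ (Fin m)))
    (hFLip : ∀ l w w', ‖gradient (fun l' => F (l', w)) l -
        gradient (fun l' => F (l', w')) l‖ ≤ L₁ * ‖w - w'‖)
    (hJb : ∀ l w, ‖J l w‖ ≤ Γ₁)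
    (hJL : ∀ l w w', ‖J l w - J l w'‖ ≤ L₂ * ‖w - w'‖) :
    ∀ (l : EuclideanSpace ℝ (Fin m)) (w wstar : EuclideanSpace ℝ (Fin n))
      (v vstar : EuclideanSpace ℝ (Fin n)), ‖vstar‖ ≤ M →
      ‖(gradient (fun l' => F (l', w)) l - J l w v) -
          (gradient (fun l' => F (l', wstar)) l - J l wstar vstar)‖ ^ 2 ≤
        (2 * L₁ ^ 2 + 4 * M ^ 2 * L₂ ^ 2) * ‖w - wstar‖ ^ 2 +
          4 * Γ₁ ^ 2 * ‖v - vstar‖ ^ 2 := by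
  intro l w wstar v vstar hv
  set A := gradient (fun l' => F (l', w)) l - gradient (fun l' => F (l', wstar)) l
  set B := (J l wstar - J l w) vstar
  set C := J l w (vstar - v)
  have hA : ‖A‖ ≤ L₁ * ‖w - wstar‖ := hFLip l w wstar
  have hB : ‖B‖ ≤ L₂ * ‖w - wstar‖ * M := by
    rw [norm_sub_rev w]
    exact (J l wstar - J l w).le_of_opNorm_le_of_le (hJL l wstar w) hv
  have hC : ‖C‖ ≤ Γ₁ * ‖v - vstar‖ := by
    rw [norm_sub_rev v]
    exact (J l w).le_of_opNorm_le (hJb l w) _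
  have hsplit : (gradient (fun l' => F (l', w)) l - J l w v) -
      (gradient (fun l' => F (l', wstar)) l - J l wstar vstar) = A + B + C := by
    rw [sub_sub_sub_comm, sub_eq_add_neg, neg_sub, add_assoc, ← (J l wstar).sub_apply_sub_eq]
  calc _ = ‖A + B + C‖ ^ 2 := by rw [hsplit]
    _ ≤ 2 * ‖A‖ ^ 2 + 4 * ‖B‖ ^ 2 + 4 * ‖C‖ ^ 2 := norm_add_add_sq_le A B C
    _ ≤ 2 * (L₁ * ‖w - wstar‖) ^ 2 + 4 * (L₂ * ‖w - wstar‖ * M) ^ 2 +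
          4 * (Γ₁ * ‖v - vstar‖) ^ 2 := by
        gcongr
    _ = _ := by ring
end

section
/- Let η ∈ (0,1), and let d, g, g', random vectors with d⁺ := G + (1−η)(d − G'), where G, G' are unbiased estimators of g, g' (conditioned on d) with variances bounded by σ² and G, G' use the same randomness. Then E‖d⁺ − g‖² ≤ (1−η)² E‖d − g'‖² + 2η² σ² + 2(1−η)² E‖G − G'‖², where the last expectation is over the shared fresh randomness. -/
/-!
Write `d⁺ - g = (1 - η) • (d - g') + B` with
`B = η • (G - g) + (1 - η) • ((G - G') - (g - g'))`. The noise `B` has mean zero, so the cross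
term vanishes and `E‖d⁺ - g‖² = (1 - η)²‖d - g'‖² + E‖B‖²`. Then `‖u + v‖² ≤ 2‖u‖² + 2‖v‖²`
splits `E‖B‖²`, and the variance of `G - G'` is at most its second moment.
-/

open MeasureTheory

theorem norm_add_sq_le_two_mul_s19 {E : Type*} [SeminormedAddCommGroup E] (u v : E) :
    ‖u + v‖ ^ 2 ≤ 2 * ‖u‖ ^ 2 + 2 * ‖v‖ ^ 2 :=
  calc ‖u + v‖ ^ 2 ≤ (‖u‖ + ‖v‖) ^ 2 := by gcongr; exact norm_add_le u v
    _ ≤ 2 * (‖u‖ ^ 2 + ‖v‖ ^ 2) := add_sq_le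
    _ = 2 * ‖u‖ ^ 2 + 2 * ‖v‖ ^ 2 := mul_add _ _ _

namespace MeasureTheory

variable {Ω E : Type*} [MeasurableSpace Ω] {μ : Measure Ω} [NormedAddCommGroup E]

theorem MemLp.integrable_norm_sq {f : Ω → E} (hf : MemLp f 2 μ) :
    Integrable (fun ω => ‖f ω‖ ^ 2) μ :=
  (memLp_two_iff_integrable_sq_norm hf.1).1 hf

theorem integral_sub_eq_zero_of_integral_eq [NormedSpace ℝ E] [CompleteSpace E]
    [IsProbabilityMeasure μ] {X : Ω → E} {m : E} (hX : Integrable X μ) (hm : ∫ ω, X ω ∂μ = m) :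
    ∫ ω, X ω - m ∂μ = 0 := by
  rw [integral_sub hX (integrable_const m), integral_const, hm]
  simp

variable [InnerProductSpace ℝ E]

theorem integral_norm_smul_add_smul_sq_le {U V : Ω → E} (hU : MemLp U 2 μ) (hV : MemLp V 2 μ)
    (s t : ℝ) :
    ∫ ω, ‖s • U ω + t • V ω‖ ^ 2 ∂μ ≤
      2 * s ^ 2 * ∫ ω, ‖U ω‖ ^ 2 ∂μ + 2 * t ^ 2 * ∫ ω, ‖V ω‖ ^ 2 ∂μ := by
  have hU2 := hU.integrable_norm_sq.const_mul (2 * s ^ 2)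
  have hV2 := hV.integrable_norm_sq.const_mul (2 * t ^ 2)
  rw [← integral_const_mul, ← integral_const_mul, ← integral_add hU2 hV2]
  refine integral_mono_of_nonneg (.of_forall fun ω => by positivity) (hU2.add hV2)
    (.of_forall fun ω => ?_)
  calc ‖s • U ω + t • V ω‖ ^ 2 ≤ 2 * ‖s • U ω‖ ^ 2 + 2 * ‖t • V ω‖ ^ 2 :=
        norm_add_sq_le_two_mul_s19 _ _
    _ = 2 * s ^ 2 * ‖U ω‖ ^ 2 + 2 * t ^ 2 * ‖V ω‖ ^ 2 := by
        simp only [norm_smul, mul_pow, Real.norm_eq_abs, sq_abs]; ring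

variable [CompleteSpace E] [IsProbabilityMeasure μ]

theorem integral_norm_add_sq_of_integral_eq_zero (a : E) {B : Ω → E} (hB : MemLp B 2 μ)
    (hB₀ : ∫ ω, B ω ∂μ = 0) :
    ∫ ω, ‖a + B ω‖ ^ 2 ∂μ = ‖a‖ ^ 2 + ∫ ω, ‖B ω‖ ^ 2 ∂μ := by
  have hinner : Integrable (fun ω => 2 * inner ℝ a (B ω)) μ :=
    ((hB.integrable one_le_two).const_inner a).const_mul 2
  have hsum : Integrable (fun ω => ‖a‖ ^ 2 + 2 * inner ℝ a (B ω)) μ :=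
    (integrable_const _).add hinner
  simp only [norm_add_sq_real]
  rw [integral_add hsum hB.integrable_norm_sq,
    integral_add (integrable_const _) hinner, integral_const_mul, integral_inner
      (hB.integrable one_le_two), hB₀]
  simp

theorem integral_norm_add_smul_add_smul_sq_le (a : E) {U V : Ω → E} (hU : MemLp U 2 μ)
    (hV : MemLp V 2 μ) (hU₀ : ∫ ω, U ω ∂μ = 0) (hV₀ : ∫ ω, V ω ∂μ = 0) (s t : ℝ) :
    ∫ ω, ‖a + (s • U ω + t • V ω)‖ ^ 2 ∂μ ≤
      ‖a‖ ^ 2 + (2 * s ^ 2 * ∫ ω, ‖U ω‖ ^ 2 ∂μ + 2 * t ^ 2 * ∫ ω, ‖V ω‖ ^ 2 ∂μ) := by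
  have hsU : MemLp (fun ω => s • U ω) 2 μ := hU.const_smul s
  have htV : MemLp (fun ω => t • V ω) 2 μ := hV.const_smul t
  have hB₀ : ∫ ω, s • U ω + t • V ω ∂μ = 0 := by
    rw [integral_add (hsU.integrable one_le_two) (htV.integrable one_le_two), integral_smul,
      integral_smul, hU₀, hV₀, smul_zero, smul_zero, add_zero]
  rw [integral_norm_add_sq_of_integral_eq_zero a (B := fun ω => s • U ω + t • V ω)
    (hsU.add htV) hB₀]
  gcongr
  exact integral_norm_smul_add_smul_sq_le hU hV s t

theorem integral_norm_sub_sq_le_of_integral_eq {X : Ω → E} {m : E} (hX : MemLp X 2 μ)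
    (hm : ∫ ω, X ω ∂μ = m) : ∫ ω, ‖X ω - m‖ ^ 2 ∂μ ≤ ∫ ω, ‖X ω‖ ^ 2 ∂μ := by
  have hsplit := integral_norm_add_sq_of_integral_eq_zero m (B := fun ω => X ω - m)
    (hX.sub (memLp_const m)) (integral_sub_eq_zero_of_integral_eq (hX.integrable one_le_two) hm)
  simp only [add_sub_cancel] at hsplit
  rw [hsplit]
  exact le_add_of_nonneg_left (sq_nonneg _)

end MeasureTheory

theorem stmt_19_general {n : ℕ} {Ω : Type*} [MeasurableSpace Ω]
    (μ : Measure Ω) [IsProbabilityMeasure μ]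
    (η σ : ℝ)
    (d g g' : EuclideanSpace ℝ (Fin n))
    (G G' : Ω → EuclideanSpace ℝ (Fin n))
    (hGint : Integrable G μ) (hG'int : Integrable G' μ)
    (hGmean : ∫ ω, G ω ∂μ = g) (hG'mean : ∫ ω, G' ω ∂μ = g')
    (hGvar : ∫ ω, ‖G ω - g‖ ^ 2 ∂μ ≤ σ ^ 2)
    (hint2 : Integrable (fun ω => ‖G ω - g‖ ^ 2) μ)
    (hint4 : Integrable (fun ω => ‖G ω - G' ω‖ ^ 2) μ) :
    ∫ ω, ‖G ω + (1 - η) • (d - G' ω) - g‖ ^ 2 ∂μ ≤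
      (1 - η) ^ 2 * ‖d - g'‖ ^ 2 + 2 * η ^ 2 * σ ^ 2 +
        2 * (1 - η) ^ 2 * ∫ ω, ‖G ω - G' ω‖ ^ 2 ∂μ := by
  have hG : MemLp (fun ω => G ω - g) 2 μ :=
    (memLp_two_iff_integrable_sq_norm (hGint.1.sub aestronglyMeasurable_const)).2 hint2
  have hX : MemLp (fun ω => G ω - G' ω) 2 μ :=
    (memLp_two_iff_integrable_sq_norm (hGint.1.sub hG'int.1)).2 hint4
  have hXmean : ∫ ω, G ω - G' ω ∂μ = g - g' := by
    rw [integral_sub hGint hG'int, hGmean, hG'mean]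
  have hXc : MemLp (fun ω => G ω - G' ω - (g - g')) 2 μ := hX.sub (memLp_const _)
  have hG₀ : ∫ ω, G ω - g ∂μ = 0 := integral_sub_eq_zero_of_integral_eq hGint hGmean
  have hXc₀ : ∫ ω, G ω - G' ω - (g - g') ∂μ = 0 :=
    integral_sub_eq_zero_of_integral_eq (X := fun ω => G ω - G' ω) (hGint.sub hG'int) hXmean
  calc ∫ ω, ‖G ω + (1 - η) • (d - G' ω) - g‖ ^ 2 ∂μ
      = ∫ ω, ‖(1 - η) • (d - g') +
          (η • (G ω - g) + (1 - η) • (G ω - G' ω - (g - g')))‖ ^ 2 ∂μ := by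
        congr with ω; congr 2; module
    _ ≤ ‖(1 - η) • (d - g')‖ ^ 2 + (2 * η ^ 2 * ∫ ω, ‖G ω - g‖ ^ 2 ∂μ +
          2 * (1 - η) ^ 2 * ∫ ω, ‖G ω - G' ω - (g - g')‖ ^ 2 ∂μ) :=
        integral_norm_add_smul_add_smul_sq_le _ hG hXc hG₀ hXc₀ η (1 - η)
    _ ≤ _ := by
        rw [norm_smul, mul_pow, Real.norm_eq_abs, sq_abs, ← add_assoc]
        gcongr _ + 2 * η ^ 2 * ?_ + 2 * (1 - η) ^ 2 * ?_
        exact integral_norm_sub_sq_le_of_integral_eq hX hXmean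

theorem stmt_19 {n : ℕ} {Ω : Type*} [MeasurableSpace Ω]
    (μ : Measure Ω) [IsProbabilityMeasure μ]
    (η σ : ℝ) (hη : η ∈ Set.Ioo (0 : ℝ) 1) (hσ : 0 ≤ σ)
    (d g g' : EuclideanSpace ℝ (Fin n))
    (G G' : Ω → EuclideanSpace ℝ (Fin n))
    (hGint : Integrable G μ) (hG'int : Integrable G' μ)
    (hGmean : ∫ ω, G ω ∂μ = g) (hG'mean : ∫ ω, G' ω ∂μ = g')
    (hGvar : ∫ ω, ‖G ω - g‖ ^ 2 ∂μ ≤ σ ^ 2)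
    (hG'var : ∫ ω, ‖G' ω - g'‖ ^ 2 ∂μ ≤ σ ^ 2)
    (hint1 : Integrable (fun ω => ‖G ω + (1 - η) • (d - G' ω) - g‖ ^ 2) μ)
    (hint2 : Integrable (fun ω => ‖G ω - g‖ ^ 2) μ)
    (hint3 : Integrable (fun ω => ‖G' ω - g'‖ ^ 2) μ)
    (hint4 : Integrable (fun ω => ‖G ω - G' ω‖ ^ 2) μ) :
    ∫ ω, ‖G ω + (1 - η) • (d - G' ω) - g‖ ^ 2 ∂μ ≤
      (1 - η) ^ 2 * ‖d - g'‖ ^ 2 + 2 * η ^ 2 * σ ^ 2 +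
        2 * (1 - η) ^ 2 * ∫ ω, ‖G ω - G' ω‖ ^ 2 ∂μ :=
  stmt_19_general μ η σ d g g' G G' hGint hG'int hGmean hG'mean hGvar hint2 hint4
end
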